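/- arXiv:2512.19657 — 4 statements merged into one kernel-verified Lean document; each statement's English description precedes it below -/
import Mathlib

section
/- Let F : Herm(H) → ℝ be a C¹ function on the real vector space of Hermitian operators that is invariant under conjugation by every element of a finite subgroup G of U(H), i.e., F(g† O g) = F(O) for all g ∈ G and all Hermitian O. Let ψ be a unit vector fixed by all of G, let φ be a unit vector orthogonal to the fixed subspace S_G, and define the curve ψ(ε) = (ψ + ε φ)/√(1+ε²) of unit vectors with associated projectors P(ε) = |ψ(ε)⟩⟨ψ(ε)|. Then the derivative of ε ↦ F(P(ε)) at ε = 0 vanishes. -/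
/-!
Differentiating at `ε = 0` gives `D σ`, where `D` is the differential of `F` at
`P(0) = |ψ⟩⟨ψ|` and `σ = |φ⟩⟨ψ| + |ψ⟩⟨φ|`. Each `g ∈ G` fixes `P(0)` and leaves `F` invariant,
so `D (g† σ g) = D σ`, and summing over `G` gives `|G| • D σ = D (|w⟩⟨ψ| + |ψ⟩⟨w|)` with
`w = ∑ g† φ`. This `w` is fixed by `G`, hence orthogonal to `φ`, hence to each `g† φ`, hence to
itself: `w = 0`.
-/

open Matrix

attribute [local instance] Matrix.frobeniusNormedAddCommGroup Matrix.frobeniusNormedSpace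

/-- The real vector space of Hermitian `n × n` complex matrices, as a real submodule of the
(Frobenius-normed) space of all complex matrices. -/
noncomputable def HermSubmodule (n : ℕ) : Submodule ℝ (Matrix (Fin n) (Fin n) ℂ) where
  carrier := {A | Aᴴ = A}
  add_mem' := by
    intro A B hA hB
    simp only [Set.mem_setOf_eq] at *
    simp [conjTranspose_add, hA, hB]
  zero_mem' := by simp
  smul_mem' := by
    intro r A hA
    simp only [Set.mem_setOf_eq] at *
    rw [conjTranspose_smul, star_trivial, hA]

section VecMulVec

variable {m ι α : Type*}

theorem Matrix.sum_vecMulVec [NonUnitalNonAssocSemiring α] (s : Finset ι) (f : ι → m → α)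
    (v : m → α) : ∑ i ∈ s, vecMulVec (f i) v = vecMulVec (∑ i ∈ s, f i) v := by
  ext a b
  simp [vecMulVec_apply, Finset.sum_mul, Finset.sum_apply, Matrix.sum_apply]

theorem Matrix.vecMulVec_sum [NonUnitalNonAssocSemiring α] (s : Finset ι) (v : m → α)
    (f : ι → m → α) : ∑ i ∈ s, vecMulVec v (f i) = vecMulVec v (∑ i ∈ s, f i) := by
  ext a b
  simp [vecMulVec_apply, Finset.mul_sum, Finset.sum_apply, Matrix.sum_apply]

theorem Matrix.conjTranspose_mul_vecMulVec_star_mul [Fintype m] [CommSemiring α] [StarRing α]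
    (A : Matrix m m α) (u v : m → α) :
    Aᴴ * vecMulVec u (star v) * A = vecMulVec (Aᴴ *ᵥ u) (star (Aᴴ *ᵥ v)) := by
  rw [mul_vecMulVec, vecMulVec_mul, star_mulVec, conjTranspose_conjTranspose]

end VecMulVec

section FixedVectors

variable {m : Type*} [Fintype m] [DecidableEq m] {G : Subgroup (unitaryGroup m ℂ)}

theorem conjTranspose_mulVec_eq_self {g : unitaryGroup m ℂ} {v : m → ℂ}
    (hv : (g : Matrix m m ℂ) *ᵥ v = v) : (g : Matrix m m ℂ)ᴴ *ᵥ v = v := by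
  conv_lhs => rw [← hv]
  rw [mulVec_mulVec, ← star_eq_conjTranspose, UnitaryGroup.star_mul_self, one_mulVec]

theorem mulVec_sum_mulVec_of_mem [Fintype G] (φ : m → ℂ) {h : unitaryGroup m ℂ} (hh : h ∈ G) :
    (h : Matrix m m ℂ) *ᵥ ∑ g : G, ((g : unitaryGroup m ℂ) : Matrix m m ℂ) *ᵥ φ =
      ∑ g : G, ((g : unitaryGroup m ℂ) : Matrix m m ℂ) *ᵥ φ := by
  simp_rw [mulVec_sum, mulVec_mulVec]
  exact Fintype.sum_equiv (Equiv.mulLeft ⟨h, hh⟩) _ _ fun g => by simp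

theorem sum_mulVec_eq_zero_of_forall_fixed_orthogonal [Fintype G] {φ : m → ℂ}
    (hφ : ∀ v : m → ℂ, (∀ g ∈ G, (g : Matrix m m ℂ) *ᵥ v = v) → star v ⬝ᵥ φ = 0) :
    ∑ g : G, ((g : unitaryGroup m ℂ) : Matrix m m ℂ) *ᵥ φ = 0 := by
  set w := ∑ g : G, ((g : unitaryGroup m ℂ) : Matrix m m ℂ) *ᵥ φ
  have hw : ∀ g ∈ G, (g : Matrix m m ℂ) *ᵥ w = w := fun g hg => mulVec_sum_mulVec_of_mem φ hg
  have hww : star w ⬝ᵥ w = 0 := calc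
    star w ⬝ᵥ w = ∑ g : G, star ((g : Matrix m m ℂ)ᴴ *ᵥ w) ⬝ᵥ φ := by
      rw [dotProduct_sum]
      refine Finset.sum_congr rfl fun g _ => ?_
      rw [dotProduct_mulVec, star_mulVec, conjTranspose_conjTranspose]
    _ = 0 := by
      simp only [fun g : G => conjTranspose_mulVec_eq_self (hw g g.2), hφ w hw,
        Finset.sum_const_zero]
  open ComplexOrder in exact dotProduct_star_self_eq_zero.mp hww

theorem sum_conjTranspose_mulVec_eq_zero_of_forall_fixed_orthogonal [Fintype G] {φ : m → ℂ}
    (hφ : ∀ v : m → ℂ, (∀ g ∈ G, (g : Matrix m m ℂ) *ᵥ v = v) → star v ⬝ᵥ φ = 0) :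
    ∑ g : G, ((g : unitaryGroup m ℂ) : Matrix m m ℂ)ᴴ *ᵥ φ = 0 := by
  rw [← sum_mulVec_eq_zero_of_forall_fixed_orthogonal hφ]
  exact Fintype.sum_equiv (Equiv.inv G) _ _ fun g => by simp [star_eq_conjTranspose]

end FixedVectors

theorem HasFDerivAt.apply_map_eq_of_comp_eq {𝕜 E F : Type*} [NontriviallyNormedField 𝕜]
    [NormedAddCommGroup E] [NormedSpace 𝕜 E] [NormedAddCommGroup F] [NormedSpace 𝕜 F]
    {f : E → F} {f' : E →L[𝕜] F} {x : E}
    (hf : HasFDerivAt f f' x) (T : E →L[𝕜] E) (hfT : f ∘ T = f) (hx : T x = x) (v : E) :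
    f' (T v) = f' v := by
  have hcomp := (hx.symm ▸ hf).comp x T.hasFDerivAt
  rw [hfT] at hcomp
  exact (DFunLike.congr_fun (hf.unique hcomp) v).symm

theorem hasDerivAt_inv_one_add_sq_smul {E : Type*} [NormedAddCommGroup E] [NormedSpace ℝ E]
    (a b c : E) : HasDerivAt (fun t : ℝ => (1 + t ^ 2)⁻¹ • (a + t • b + t ^ 2 • c)) b 0 := by
  have hden : HasDerivAt (fun t : ℝ => (1 + t ^ 2)⁻¹) 0 0 := by
    simpa [Pi.inv_def] using ((hasDerivAt_pow 2 (0 : ℝ)).const_add 1).inv (by norm_num)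
  have hnum : HasDerivAt (fun t : ℝ => a + t • b + t ^ 2 • c) b 0 :=
    ((((hasDerivAt_id (0 : ℝ)).smul_const b).const_add a).add
      ((hasDerivAt_pow 2 (0 : ℝ)).smul_const c)).congr_deriv (by simp)
  exact (hden.smul hnum).congr_deriv (by simp)

section Hermitian

variable {n : ℕ}

theorem mem_hermSubmodule {A : Matrix (Fin n) (Fin n) ℂ} : A ∈ HermSubmodule n ↔ Aᴴ = A :=
  Iff.rfl

theorem vecMulVec_star_self_mem_hermSubmodule (u : Fin n → ℂ) :
    vecMulVec u (star u) ∈ HermSubmodule n := by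
  simp [mem_hermSubmodule]

theorem vecMulVec_star_add_mem_hermSubmodule (u v : Fin n → ℂ) :
    vecMulVec u (star v) + vecMulVec v (star u) ∈ HermSubmodule n := by
  simp [mem_hermSubmodule, add_comm]

theorem conjTranspose_mul_mul_mem_hermSubmodule (A : Matrix (Fin n) (Fin n) ℂ)
    {O : Matrix (Fin n) (Fin n) ℂ} (hO : O ∈ HermSubmodule n) : Aᴴ * O * A ∈ HermSubmodule n := by
  rw [mem_hermSubmodule] at hO ⊢
  simp [conjTranspose_mul, hO, Matrix.mul_assoc]

def hermConj (A : Matrix (Fin n) (Fin n) ℂ) : HermSubmodule n →ₗ[ℝ] HermSubmodule n where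
  toFun O := ⟨Aᴴ * O * A, conjTranspose_mul_mul_mem_hermSubmodule A O.2⟩
  map_add' O O' := Subtype.ext <| by simp [Matrix.mul_add, Matrix.add_mul]
  map_smul' r O := Subtype.ext <| by simp

theorem hermConj_apply (A : Matrix (Fin n) (Fin n) ℂ) (O : HermSubmodule n) :
    hermConj A O = ⟨Aᴴ * O * A, conjTranspose_mul_mul_mem_hermSubmodule A O.2⟩ :=
  rfl

noncomputable def outerSelf (u : Fin n → ℂ) : HermSubmodule n :=
  ⟨vecMulVec u (star u), vecMulVec_star_self_mem_hermSubmodule u⟩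

noncomputable def outerSymm (u v : Fin n → ℂ) : HermSubmodule n :=
  ⟨vecMulVec u (star v) + vecMulVec v (star u), vecMulVec_star_add_mem_hermSubmodule u v⟩

theorem hermConj_outerSelf (A : Matrix (Fin n) (Fin n) ℂ) (u : Fin n → ℂ) :
    hermConj A (outerSelf u) = outerSelf (Aᴴ *ᵥ u) :=
  Subtype.ext <| by simp [hermConj_apply, outerSelf, conjTranspose_mul_vecMulVec_star_mul]

theorem hermConj_outerSymm (A : Matrix (Fin n) (Fin n) ℂ) (u v : Fin n → ℂ) :
    hermConj A (outerSymm u v) = outerSymm (Aᴴ *ᵥ u) (Aᴴ *ᵥ v) :=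
  Subtype.ext <| by
    simp [hermConj_apply, outerSymm, Matrix.mul_add, Matrix.add_mul,
      conjTranspose_mul_vecMulVec_star_mul]

theorem sum_outerSymm_left {ι : Type*} (s : Finset ι) (f : ι → Fin n → ℂ) (v : Fin n → ℂ) :
    ∑ i ∈ s, outerSymm (f i) v = outerSymm (∑ i ∈ s, f i) v :=
  Subtype.ext <| by
    simp [outerSymm, Finset.sum_add_distrib, sum_vecMulVec, vecMulVec_sum, star_sum]

theorem outerSymm_zero_left (v : Fin n → ℂ) : outerSymm 0 v = 0 :=
  Subtype.ext <| by simp [outerSymm]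

noncomputable def projectorCurve (ψ φ : Fin n → ℂ) (t : ℝ) : HermSubmodule n :=
  (1 + t ^ 2)⁻¹ • (outerSelf ψ + t • outerSymm φ ψ + t ^ 2 • outerSelf φ)

theorem coe_projectorCurve (ψ φ : Fin n → ℂ) (t : ℝ) :
    (projectorCurve ψ φ t : Matrix (Fin n) (Fin n) ℂ) =
      ((1 + t ^ 2 : ℝ) : ℂ)⁻¹ • vecMulVec (ψ + (t : ℂ) • φ) (star (ψ + (t : ℂ) • φ)) := by
  ext i j
  simp only [projectorCurve, outerSelf, outerSymm, Submodule.coe_smul, Submodule.coe_add,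
    vecMulVec_apply, Pi.add_apply, Pi.smul_apply, Pi.star_apply, Matrix.add_apply,
    Matrix.smul_apply, star_add, star_smul, smul_eq_mul, Complex.real_smul, Complex.star_def,
    Complex.conj_ofReal]
  push_cast
  ring

theorem projectorCurve_zero (ψ φ : Fin n → ℂ) : projectorCurve ψ φ 0 = outerSelf ψ := by
  simp [projectorCurve]

theorem hasDerivAt_projectorCurve (ψ φ : Fin n → ℂ) :
    HasDerivAt (projectorCurve ψ φ) (outerSymm φ ψ) 0 :=
  hasDerivAt_inv_one_add_sq_smul _ _ _

theorem sum_hermConj_outerSymm_eq_zero {G : Subgroup (unitaryGroup (Fin n) ℂ)} [Fintype G]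
    {ψ φ : Fin n → ℂ} (hψ : ∀ g ∈ G, (g : Matrix (Fin n) (Fin n) ℂ) *ᵥ ψ = ψ)
    (hφ : ∀ v : Fin n → ℂ, (∀ g ∈ G, (g : Matrix (Fin n) (Fin n) ℂ) *ᵥ v = v) →
      star v ⬝ᵥ φ = 0) :
    ∑ g : G, hermConj ((g : unitaryGroup (Fin n) ℂ) : Matrix (Fin n) (Fin n) ℂ)
      (outerSymm φ ψ) = 0 := by
  simp only [hermConj_outerSymm, fun g : G => conjTranspose_mulVec_eq_self (hψ g g.2)]
  rw [sum_outerSymm_left, sum_conjTranspose_mulVec_eq_zero_of_forall_fixed_orthogonal hφ,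
    outerSymm_zero_left]

end Hermitian

theorem stmt3_general (n : ℕ) (G : Subgroup (Matrix.unitaryGroup (Fin n) ℂ)) [Fintype G]
    (F : HermSubmodule n → ℝ)
    (hF : ContDiff ℝ 1 F)
    (hFinv : ∀ (g : Matrix.unitaryGroup (Fin n) ℂ), g ∈ G →
      ∀ (O : HermSubmodule n)
        (h : ((g : Matrix (Fin n) (Fin n) ℂ))ᴴ * (O : Matrix (Fin n) (Fin n) ℂ) *
              (g : Matrix (Fin n) (Fin n) ℂ) ∈ HermSubmodule n),
        F ⟨_, h⟩ = F O)
    (ψ φ : Fin n → ℂ)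
    (hψ_fixed : ∀ g ∈ G, (g : Matrix (Fin n) (Fin n) ℂ).mulVec ψ = ψ)
    (hφ_perp : ∀ v : Fin n → ℂ,
      (∀ g ∈ G, (g : Matrix (Fin n) (Fin n) ℂ).mulVec v = v) → star v ⬝ᵥ φ = 0)
    (P : ℝ → Matrix (Fin n) (Fin n) ℂ)
    (hP : ∀ ε : ℝ, P ε = ((1 + ε ^ 2 : ℝ) : ℂ)⁻¹ •
      vecMulVec (ψ + (ε : ℂ) • φ) (star (ψ + (ε : ℂ) • φ)))
    (hPmem : ∀ ε : ℝ, P ε ∈ HermSubmodule n) :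
    deriv (fun ε : ℝ => F ⟨P ε, hPmem ε⟩) 0 = 0 := by
  have hcurve : (fun ε : ℝ => F ⟨P ε, hPmem ε⟩) = F ∘ projectorCurve ψ φ :=
    funext fun ε => congrArg F <| Subtype.ext <| by
      change P ε = _
      rw [hP, coe_projectorCurve]
  obtain ⟨D, hD⟩ := hF.differentiable one_ne_zero (outerSelf ψ)
  have hderiv : HasDerivAt (F ∘ projectorCurve ψ φ) (D (outerSymm φ ψ)) 0 :=
    hD.comp_hasDerivAt_of_eq 0 (hasDerivAt_projectorCurve ψ φ) (projectorCurve_zero ψ φ).symm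
  have hinv : ∀ g ∈ G, D (hermConj g (outerSymm φ ψ)) = D (outerSymm φ ψ) := fun g hg =>
    hD.apply_map_eq_of_comp_eq (LinearMap.toContinuousLinearMap (hermConj g))
      (funext fun O => by
        rw [Function.comp_apply, LinearMap.coe_toContinuousLinearMap', hermConj_apply]
        exact hFinv g hg O _)
      ((hermConj_outerSelf _ ψ).trans
        (congrArg outerSelf (conjTranspose_mulVec_eq_self (hψ_fixed g hg)))) (outerSymm φ ψ)
  have hcard : (Fintype.card G : ℝ) * D (outerSymm φ ψ) = 0 := calc
    _ = ∑ g : G, D (hermConj ((g : unitaryGroup (Fin n) ℂ) : Matrix (Fin n) (Fin n) ℂ)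
          (outerSymm φ ψ)) := by simp [fun g : G => hinv g g.2]
    _ = 0 := by rw [← map_sum, sum_hermConj_outerSymm_eq_zero hψ_fixed hφ_perp, map_zero]
  rw [hcurve, hderiv.deriv]
  exact (mul_eq_zero.mp hcard).resolve_left (Nat.cast_ne_zero.mpr Fintype.card_ne_zero)

/-- Let `F` be a `C¹` real-valued function on the real vector space of
Hermitian operators that is invariant under conjugation by every element of a finite
subgroup `G` of the unitary group.  Let `ψ` be a unit vector fixed by all of `G`, `φ` a
unit vector orthogonal to the fixed subspace `S_G`, and let
`P(ε) = |ψ(ε)⟩⟨ψ(ε)|` with `ψ(ε) = (ψ + ε φ)/√(1+ε²)`.  Then `d/dε F(P(ε))` vanishes at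
`ε = 0`. -/
theorem stmt3 (n : ℕ) (G : Subgroup (Matrix.unitaryGroup (Fin n) ℂ)) [Fintype G]
    (F : HermSubmodule n → ℝ)
    (hF : ContDiff ℝ 1 F)
    (hFinv : ∀ (g : Matrix.unitaryGroup (Fin n) ℂ), g ∈ G →
      ∀ (O : HermSubmodule n)
        (h : ((g : Matrix (Fin n) (Fin n) ℂ))ᴴ * (O : Matrix (Fin n) (Fin n) ℂ) *
              (g : Matrix (Fin n) (Fin n) ℂ) ∈ HermSubmodule n),
        F ⟨_, h⟩ = F O)
    (ψ φ : Fin n → ℂ)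
    (hψ_unit : star ψ ⬝ᵥ ψ = 1)
    (hψ_fixed : ∀ g ∈ G, (g : Matrix (Fin n) (Fin n) ℂ).mulVec ψ = ψ)
    (hφ_unit : star φ ⬝ᵥ φ = 1)
    (hφ_perp : ∀ v : Fin n → ℂ,
      (∀ g ∈ G, (g : Matrix (Fin n) (Fin n) ℂ).mulVec v = v) → star v ⬝ᵥ φ = 0)
    (P : ℝ → Matrix (Fin n) (Fin n) ℂ)
    (hP : ∀ ε : ℝ, P ε = ((1 + ε ^ 2 : ℝ) : ℂ)⁻¹ •
      vecMulVec (ψ + (ε : ℂ) • φ) (star (ψ + (ε : ℂ) • φ)))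
    (hPmem : ∀ ε : ℝ, P ε ∈ HermSubmodule n) :
    deriv (fun ε : ℝ => F ⟨P ε, hPmem ε⟩) 0 = 0 :=
  stmt3_general n G F hF hFinv ψ φ hψ_fixed hφ_perp P hP hPmem
end

section
/- Let G ⊂ U(H) be a finite subgroup and let ψ ∈ H be a unit vector with positive G-stabilizer fidelity F_G(ψ) = max_{s ∈ SS_G} |⟨s,ψ⟩|² > 0. Suppose P denotes the orthogonal projection onto the span of SS_G, and suppose P ψ = Σ_i c_i s_i is any finite decomposition of P ψ into G-stabilizer states s_i ∈ SS_G with complex coefficients c_i. Then (Σ_i |c_i|)² ≥ ⟨ψ, P ψ⟩² / F_G(ψ). -/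
/-! Expanding `⟨ψ, Pψ⟩ = ∑ᵢ cᵢ ⟨ψ, sᵢ⟩` and bounding every overlap `|⟨sᵢ, ψ⟩|` by `√F_G(ψ)`,
the triangle inequality gives `|⟨ψ, Pψ⟩| ≤ (∑ᵢ |cᵢ|) √F_G(ψ)`; squaring yields the claim.
The supremum defining `F_G(ψ)` is finite by Cauchy–Schwarz, since stabilizer states are unit
vectors. -/

open Matrix

/-- The set of `G`-stabilizer states: unit vectors `s` such that the joint fixed subspace of
some subgroup `G' ≤ G` is exactly the complex line `ℂ · s`. -/
def StabStates (n : ℕ) (G : Subgroup (Matrix.unitaryGroup (Fin n) ℂ)) :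
    Set (Fin n → ℂ) :=
  {s | star s ⬝ᵥ s = 1 ∧
    ∃ G' : Subgroup (Matrix.unitaryGroup (Fin n) ℂ), G' ≤ G ∧
      {v : Fin n → ℂ | ∀ g ∈ G', (g : Matrix (Fin n) (Fin n) ℂ).mulVec v = v}
        = {v : Fin n → ℂ | ∃ c : ℂ, v = c • s}}

/-- The `G`-stabilizer fidelity `F_G(ψ) = sup_{s ∈ SS_G} |⟨s,ψ⟩|²`. -/
noncomputable def stabFidelity (n : ℕ) (G : Subgroup (Matrix.unitaryGroup (Fin n) ℂ))
    (ψ : Fin n → ℂ) : ℝ :=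
  sSup {x : ℝ | ∃ s ∈ StabStates n G, x = ‖star s ⬝ᵥ ψ‖ ^ 2}

theorem Matrix.norm_star_dotProduct_sq_le {ι 𝕜 : Type*} [Fintype ι] [RCLike 𝕜] (x y : ι → 𝕜) :
    ‖star x ⬝ᵥ y‖ ^ 2 ≤ RCLike.re (star x ⬝ᵥ x) * RCLike.re (star y ⬝ᵥ y) := by
  have h := inner_mul_inner_self_le (𝕜 := 𝕜) (WithLp.toLp 2 x) (WithLp.toLp 2 y)
  simp only [EuclideanSpace.inner_toLp_toLp] at h
  rwa [dotProduct_comm y, dotProduct_comm x (star y), dotProduct_comm x, dotProduct_comm y,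
    star_dotProduct (v := y), norm_star, ← sq] at h

theorem norm_mul_sum_le_of_norm_le {ι 𝕜 : Type*} [NormedDivisionRing 𝕜] (s : Finset ι)
    (c w : ι → 𝕜) {M : ℝ} (hw : ∀ i ∈ s, ‖w i‖ ≤ M) :
    ‖∑ i ∈ s, c i * w i‖ ≤ (∑ i ∈ s, ‖c i‖) * M :=
  calc ‖∑ i ∈ s, c i * w i‖ ≤ ∑ i ∈ s, ‖c i‖ * ‖w i‖ := by
        simpa only [norm_mul] using norm_sum_le s (fun i => c i * w i)
    _ ≤ ∑ i ∈ s, ‖c i‖ * M := by gcongr with i hi; exact hw i hi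
    _ = (∑ i ∈ s, ‖c i‖) * M := (Finset.sum_mul ..).symm

namespace StabStates

variable {n : ℕ} {G : Subgroup (Matrix.unitaryGroup (Fin n) ℂ)}

theorem norm_star_dotProduct_sq_le {s : Fin n → ℂ} (hs : s ∈ StabStates n G) (ψ : Fin n → ℂ) :
    ‖star s ⬝ᵥ ψ‖ ^ 2 ≤ (star ψ ⬝ᵥ ψ).re := by
  simpa [hs.1] using Matrix.norm_star_dotProduct_sq_le s ψ

end StabStates

section stabFidelity

variable {n : ℕ} {G : Subgroup (Matrix.unitaryGroup (Fin n) ℂ)} {ψ : Fin n → ℂ}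

theorem stabFidelity_nonneg : 0 ≤ stabFidelity n G ψ :=
  Real.sSup_nonneg fun _ ⟨_, _, hx⟩ => hx ▸ sq_nonneg _

theorem norm_star_dotProduct_sq_le_stabFidelity {s : Fin n → ℂ} (hs : s ∈ StabStates n G) :
    ‖star s ⬝ᵥ ψ‖ ^ 2 ≤ stabFidelity n G ψ :=
  le_csSup
    ⟨(star ψ ⬝ᵥ ψ).re, fun _ ⟨_, ht, hx⟩ => hx ▸ StabStates.norm_star_dotProduct_sq_le ht ψ⟩
    ⟨s, hs, rfl⟩

end stabFidelity

theorem stmt5_general (n : ℕ) (G : Subgroup (Matrix.unitaryGroup (Fin n) ℂ))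
    (ψ : Fin n → ℂ)
    (P : Matrix (Fin n) (Fin n) ℂ)
    (k : ℕ) (c : Fin k → ℂ) (s : Fin k → (Fin n → ℂ))
    (hs : ∀ i, s i ∈ StabStates n G)
    (hdecomp : P.mulVec ψ = ∑ i, c i • s i) :
    (∑ i, ‖c i‖) ^ 2 ≥ (star ψ ⬝ᵥ P.mulVec ψ).re ^ 2 / stabFidelity n G ψ := by
  set F := stabFidelity n G ψ
  have hoverlap : ∀ i ∈ Finset.univ, ‖star ψ ⬝ᵥ s i‖ ≤ √F := fun i _ => by
    rw [star_dotProduct, norm_star]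
    exact Real.le_sqrt_of_sq_le (norm_star_dotProduct_sq_le_stabFidelity (hs i))
  have hz : ‖star ψ ⬝ᵥ P *ᵥ ψ‖ ≤ (∑ i, ‖c i‖) * √F := by
    simpa only [hdecomp, dotProduct_sum, dotProduct_smul, smul_eq_mul]
      using norm_mul_sum_le_of_norm_le _ c _ hoverlap
  -- also covers `F = 0`, where the right-hand side is `x / 0 = 0`
  refine div_le_of_le_mul₀ stabFidelity_nonneg (sq_nonneg _) ?_
  calc (star ψ ⬝ᵥ P *ᵥ ψ).re ^ 2 ≤ ‖star ψ ⬝ᵥ P *ᵥ ψ‖ ^ 2 := by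
        simpa only [sq_abs] using pow_le_pow_left₀ (abs_nonneg _) (Complex.abs_re_le_norm _) 2
    _ ≤ ((∑ i, ‖c i‖) * √F) ^ 2 := by gcongr
    _ = (∑ i, ‖c i‖) ^ 2 * F := by rw [mul_pow, Real.sq_sqrt stabFidelity_nonneg]

/-- Let `ψ` be a unit vector with positive `G`-stabilizer fidelity, let `P`
be the orthogonal projection onto the span of the `G`-stabilizer states, and let
`P ψ = ∑ᵢ cᵢ sᵢ` be any finite decomposition into stabilizer states.  Then
`(∑ᵢ |cᵢ|)² ≥ ⟨ψ, P ψ⟩² / F_G(ψ)`. -/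
theorem stmt5 (n : ℕ) (G : Subgroup (Matrix.unitaryGroup (Fin n) ℂ)) [Fintype G]
    (ψ : Fin n → ℂ) (hψ_unit : star ψ ⬝ᵥ ψ = 1)
    (hF_pos : 0 < stabFidelity n G ψ)
    (P : Matrix (Fin n) (Fin n) ℂ)
    (hP_herm : Pᴴ = P) (hP_idem : P * P = P)
    (hP_range : ∀ v : Fin n → ℂ, P.mulVec v ∈ Submodule.span ℂ (StabStates n G))
    (hP_fix : ∀ v ∈ Submodule.span ℂ (StabStates n G), P.mulVec v = v)
    (k : ℕ) (c : Fin k → ℂ) (s : Fin k → (Fin n → ℂ))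
    (hs : ∀ i, s i ∈ StabStates n G)
    (hdecomp : P.mulVec ψ = ∑ i, c i • s i) :
    (∑ i, ‖c i‖) ^ 2 ≥ (star ψ ⬝ᵥ P.mulVec ψ).re ^ 2 / stabFidelity n G ψ :=
  stmt5_general n G ψ P k c s hs hdecomp
end

section
/- Let G ⊂ U(H) be a finite subgroup, ψ ∈ H a unit vector with F_G(ψ) > 0, and suppose there exists a finite subgroup Q of the normalizer of G in U(H) such that |ψ⟩⟨ψ| = (1/|Q|) Σ_{q∈Q} q. Let s be a G-stabilizer state attaining the maximum overlap, |⟨ψ,s⟩|² = F_G(ψ). Then ψ = (1/(|Q| ⟨ψ,s⟩)) Σ_{q∈Q} q s, and in particular ψ lies in the span of the set SS_G of G-stabilizer states. -/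
/-!
Applying `|ψ⟩⟨ψ| = |Q|⁻¹ ∑ q` to `s` gives `⟨ψ,s⟩ ψ = |Q|⁻¹ ∑ q s`, and `⟨ψ,s⟩ ≠ 0` because
`F_G(ψ) > 0`. Each `q s` is again a `G`-stabilizer state: if `ℂ s` is the fixed space of `G' ≤ G`,
then `ℂ (q s)` is the fixed space of `q G' q⁻¹`, which lies in `G` since `q` normalizes `G`.
-/

open Matrix

section UnitaryMulVec

variable {ι R : Type*} [Fintype ι] [DecidableEq ι] [CommRing R] [StarRing R]

lemma star_unitary_mulVec_mulVec (q : unitaryGroup ι R) (v : ι → R) :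
    star (q : Matrix ι ι R) *ᵥ ((q : Matrix ι ι R) *ᵥ v) = v := by
  rw [mulVec_mulVec, Unitary.star_mul_self_of_mem q.2, one_mulVec]

lemma unitary_mulVec_star_mulVec (q : unitaryGroup ι R) (v : ι → R) :
    (q : Matrix ι ι R) *ᵥ (star (q : Matrix ι ι R) *ᵥ v) = v := by
  rw [mulVec_mulVec, Unitary.mul_star_self_of_mem q.2, one_mulVec]

lemma unitary_mulVec_injective (q : unitaryGroup ι R) :
    Function.Injective ((q : Matrix ι ι R) *ᵥ ·) :=
  Function.LeftInverse.injective (star_unitary_mulVec_mulVec q)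

lemma star_unitary_mulVec_eq_iff (q : unitaryGroup ι R) (v w : ι → R) :
    star (q : Matrix ι ι R) *ᵥ v = w ↔ v = (q : Matrix ι ι R) *ᵥ w := by
  constructor
  · rintro rfl
    rw [unitary_mulVec_star_mulVec]
  · rintro rfl
    exact star_unitary_mulVec_mulVec q w

lemma star_unitary_mulVec_dotProduct_unitary_mulVec (q : unitaryGroup ι R) (v w : ι → R) :
    star ((q : Matrix ι ι R) *ᵥ v) ⬝ᵥ ((q : Matrix ι ι R) *ᵥ w) = star v ⬝ᵥ w := by
  rw [star_mulVec, dotProduct_mulVec, vecMul_vecMul, ← star_eq_conjTranspose,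
    Unitary.star_mul_self_of_mem q.2, vecMul_one]

lemma conj_mulVec_eq_self_iff (q g : unitaryGroup ι R) (v : ι → R) :
    ((MulAut.conj q g : unitaryGroup ι R) : Matrix ι ι R) *ᵥ v = v ↔
      (g : Matrix ι ι R) *ᵥ (star (q : Matrix ι ι R) *ᵥ v) = star (q : Matrix ι ι R) *ᵥ v := by
  have hconj : ((MulAut.conj q g : unitaryGroup ι R) : Matrix ι ι R) *ᵥ v =
      (q : Matrix ι ι R) *ᵥ ((g : Matrix ι ι R) *ᵥ (star (q : Matrix ι ι R) *ᵥ v)) := by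
    rw [MulAut.conj_apply, ← Unitary.star_eq_inv, Submonoid.coe_mul, Submonoid.coe_mul,
      Unitary.coe_star, mulVec_mulVec, mulVec_mulVec, mul_assoc]
  calc _ ↔ (q : Matrix ι ι R) *ᵥ ((g : Matrix ι ι R) *ᵥ (star (q : Matrix ι ι R) *ᵥ v)) =
        (q : Matrix ι ι R) *ᵥ (star (q : Matrix ι ι R) *ᵥ v) := by
          rw [hconj, unitary_mulVec_star_mulVec]
    _ ↔ _ := (unitary_mulVec_injective q).eq_iff

end UnitaryMulVec

lemma unitary_mulVec_mem_stabStates {n : ℕ} {G : Subgroup (unitaryGroup (Fin n) ℂ)}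
    {q : unitaryGroup (Fin n) ℂ} (hq : q ∈ Subgroup.normalizer G) {s : Fin n → ℂ}
    (hs : s ∈ StabStates n G) : (q : Matrix (Fin n) (Fin n) ℂ) *ᵥ s ∈ StabStates n G := by
  obtain ⟨hs_unit, G', hG', hfix⟩ := hs
  refine ⟨by rwa [star_unitary_mulVec_dotProduct_unitary_mulVec],
    G'.map (MulAut.conj q).toMonoidHom, ?_, ?_⟩
  · rintro _ ⟨g, hg, rfl⟩
    exact (Subgroup.mem_normalizer_iff.mp hq g).mp (hG' hg)
  · ext v
    have hfix_v := Set.ext_iff.mp hfix (star (q : Matrix (Fin n) (Fin n) ℂ) *ᵥ v)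
    simp only [Set.mem_ofPred_eq, star_unitary_mulVec_eq_iff, mulVec_smul] at hfix_v
    simp only [Set.mem_ofPred_eq, Subgroup.mem_map, forall_exists_index, and_imp,
      forall_apply_eq_imp_iff₂, MulEquiv.coe_toMonoidHom, conj_mulVec_eq_self_iff, hfix_v]

theorem stmt6_general (n : ℕ) (G Q : Subgroup (Matrix.unitaryGroup (Fin n) ℂ))
    [Fintype Q]
    (hQ : Q ≤ Subgroup.normalizer G)
    (ψ : Fin n → ℂ)
    (hF_pos : 0 < stabFidelity n G ψ)
    (hproj : vecMulVec ψ (star ψ) = (Fintype.card Q : ℂ)⁻¹ •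
      ∑ q : Q, ((q : Matrix.unitaryGroup (Fin n) ℂ) : Matrix (Fin n) (Fin n) ℂ))
    (s : Fin n → ℂ) (hs : s ∈ StabStates n G)
    (hmax : ‖star ψ ⬝ᵥ s‖ ^ 2 = stabFidelity n G ψ) :
    ψ = ((Fintype.card Q : ℂ) * (star ψ ⬝ᵥ s))⁻¹ •
        ∑ q : Q, ((q : Matrix (Fin n) (Fin n) ℂ)).mulVec s ∧
    ψ ∈ Submodule.span ℂ (StabStates n G) := by
  have hc : star ψ ⬝ᵥ s ≠ 0 := by
    intro h
    rw [h, norm_zero, sq, mul_zero] at hmax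
    exact hF_pos.ne hmax
  have hproj_s : (star ψ ⬝ᵥ s) • ψ = (Fintype.card Q : ℂ)⁻¹ •
      ∑ q : Q, ((q : Matrix (Fin n) (Fin n) ℂ)).mulVec s := by
    rw [← op_smul_eq_smul, ← vecMulVec_mulVec, hproj, smul_mulVec, sum_mulVec]
  have hψ : ψ = ((Fintype.card Q : ℂ) * (star ψ ⬝ᵥ s))⁻¹ •
      ∑ q : Q, ((q : Matrix (Fin n) (Fin n) ℂ)).mulVec s := by
    rw [mul_inv, mul_comm, ← smul_smul, ← hproj_s, smul_smul, inv_mul_cancel₀ hc, one_smul]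
  refine ⟨hψ, ?_⟩
  rw [hψ]
  exact Submodule.smul_mem _ _ <| Submodule.sum_mem _ fun q _ =>
    Submodule.subset_span (unitary_mulVec_mem_stabStates (hQ q.2) hs)

/-- Suppose `ψ` is a unit vector with `F_G(ψ) > 0` and there is a finite
subgroup `Q` of the normalizer of `G` such that `|ψ⟩⟨ψ| = (1/|Q|) ∑_{q∈Q} q`.  If `s` is a
`G`-stabilizer state attaining the maximal overlap `|⟨ψ,s⟩|² = F_G(ψ)`, then
`ψ = (1/(|Q| ⟨ψ,s⟩)) ∑_{q∈Q} q s`, and in particular `ψ` lies in the span of the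
`G`-stabilizer states. -/
theorem stmt6 (n : ℕ) (G Q : Subgroup (Matrix.unitaryGroup (Fin n) ℂ))
    [Fintype G] [Fintype Q]
    (hQ : Q ≤ Subgroup.normalizer G)
    (ψ : Fin n → ℂ) (hψ_unit : star ψ ⬝ᵥ ψ = 1)
    (hF_pos : 0 < stabFidelity n G ψ)
    (hproj : vecMulVec ψ (star ψ) = (Fintype.card Q : ℂ)⁻¹ •
      ∑ q : Q, ((q : Matrix.unitaryGroup (Fin n) ℂ) : Matrix (Fin n) (Fin n) ℂ))
    (s : Fin n → ℂ) (hs : s ∈ StabStates n G)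
    (hmax : ‖star ψ ⬝ᵥ s‖ ^ 2 = stabFidelity n G ψ) :
    ψ = ((Fintype.card Q : ℂ) * (star ψ ⬝ᵥ s))⁻¹ •
        ∑ q : Q, ((q : Matrix (Fin n) (Fin n) ℂ)).mulVec s ∧
    ψ ∈ Submodule.span ℂ (StabStates n G) :=
  stmt6_general n G Q hQ ψ hF_pos hproj s hs hmax
end

section
/- The mana is additive under tensor products: for density operators ρ on (ℂ^d)^{⊗N} and σ on (ℂ^d)^{⊗M} with d an odd prime, ‖ρ ⊗ σ‖_W = ‖ρ‖_W · ‖σ‖_W, and hence M(ρ ⊗ σ) = M(ρ) + M(σ). -/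
open Matrix Complex Kronecker
open scoped ComplexOrder

/-- `ω = exp(2πi/d)`. -/
noncomputable def qomega (d : ℕ) : ℂ := Complex.exp (2 * Real.pi * Complex.I / d)

/-- `τ = ω^{(d+1)/2}`, a square root of `ω` for odd `d`. -/
noncomputable def qtau (d : ℕ) : ℂ := qomega d ^ ((d + 1) / 2)

/-- `ω` raised to a power in `ℤ/d` (well defined since `ω^d = 1`). -/
noncomputable def eomega (d : ℕ) (x : ZMod d) : ℂ := qomega d ^ x.val

/-- `τ` raised to a power in `ℤ/d` (well defined for odd `d` since `τ^d = 1`). -/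
noncomputable def etau (d : ℕ) (x : ZMod d) : ℂ := qtau d ^ x.val

/-- The discrete phase space `(ℤ/d)^N × (ℤ/d)^N` of `N` qudits. -/
abbrev PhasePoint (d N : ℕ) := (Fin N → ZMod d) × (Fin N → ZMod d)

/-- The symplectic form `⟨(p,q),(p',q')⟩ = p·q' − q·p'` on the discrete phase space. -/
def symp (d N : ℕ) (χ χ' : PhasePoint d N) : ZMod d :=
  χ.1 ⬝ᵥ χ'.2 - χ.2 ⬝ᵥ χ'.1

/-- The Heisenberg–Weyl displacement operator `T_{(p,q)} = τ^{p·q} X^p Z^q`, whose matrix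
entries are `(T_{(p,q)})_{i,j} = τ^{p·q} ω^{q·j} δ_{i, j+p}`. -/
noncomputable def Disp (d N : ℕ) (χ : PhasePoint d N) :
    Matrix (Fin N → ZMod d) (Fin N → ZMod d) ℂ :=
  etau d (χ.1 ⬝ᵥ χ.2) •
    Matrix.of fun i j : Fin N → ZMod d =>
      if i = j + χ.1 then eomega d (χ.2 ⬝ᵥ j) else 0


/-- The phase-point operator `A_χ = (1/d^N) ∑_{χ'} ω^{−⟨χ,χ'⟩} T_{χ'}`. -/
noncomputable def PhasePointOp (d N : ℕ) [NeZero d] (χ : PhasePoint d N) :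
    Matrix (Fin N → ZMod d) (Fin N → ZMod d) ℂ :=
  ((d : ℂ) ^ N)⁻¹ • ∑ χ' : PhasePoint d N, eomega d (-(symp d N χ χ')) • Disp d N χ'

/-- The (real-valued) discrete Wigner function `W_χ(ρ) = (1/d^N) Tr(A_χ ρ)`. -/
noncomputable def WignerRe (d N : ℕ) [NeZero d]
    (ρ : Matrix (Fin N → ZMod d) (Fin N → ZMod d) ℂ) (χ : PhasePoint d N) : ℝ :=
  (((d : ℂ) ^ N)⁻¹ * (PhasePointOp d N χ * ρ).trace).re

/-- The Wigner function of a product state `ρ ⊗ σ` of `N + M` qudits, evaluated at a pair of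
phase-space points, using the factorization `A_{(χ₁,χ₂)} = A_{χ₁} ⊗ A_{χ₂}` of the
phase-point operators of the combined system. -/
noncomputable def WignerReProd (d N M : ℕ) [NeZero d]
    (ρ : Matrix (Fin N → ZMod d) (Fin N → ZMod d) ℂ)
    (σ : Matrix (Fin M → ZMod d) (Fin M → ZMod d) ℂ)
    (χ : PhasePoint d N × PhasePoint d M) : ℝ :=
  (((d : ℂ) ^ (N + M))⁻¹ *
    ((PhasePointOp d N χ.1 ⊗ₖ PhasePointOp d M χ.2) * (ρ ⊗ₖ σ)).trace).re

/-!
Since `d` is odd, `τ = ω^((d+1)/2)` squares to `ω`, which makes `T_χᴴ = T_{-χ}` and hence every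
phase-point operator `A_χ` Hermitian. For Hermitian `ρ` the numbers `Tr(A_χ ρ)` are then real, so
the Wigner function of `ρ ⊗ σ` is the product of those of `ρ` and `σ`, and `‖ρ ⊗ σ‖_W` factors.
For the logarithm both factors must be nonzero: orthogonality of the characters
`χ ↦ ω^(-⟨χ, χ'⟩)`, `χ' ≠ 0`, gives `∑_χ A_χ = d^N • 1`, so the Wigner function sums to
`Tr ρ = 1` and `‖ρ‖_W ≥ 1`.
-/

lemma two_mul_natCast_half {d : ℕ} (hodd : Odd d) :
    (2 : ZMod d) * (((d + 1) / 2 : ℕ) : ZMod d) = 1 := by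
  obtain ⟨k, hk⟩ := hodd
  have h : (d + 1) / 2 = k + 1 := by omega
  have : (2 : ZMod d) * ((k + 1 : ℕ) : ZMod d) = (d : ZMod d) + 1 := by
    rw [hk]; push_cast; ring
  rw [h, this, ZMod.natCast_self, zero_add]

theorem AddChar.sum_comp_linearMap_eq_zero {R M R' : Type*} [CommRing R] [AddCommGroup M]
    [Module R M] [Fintype M] [CommRing R'] [IsDomain R'] {ψ : AddChar R R'}
    (hψ : ψ.IsPrimitive) {f : M →ₗ[R] R} (hf : f ≠ 0) : ∑ x, ψ (f x) = 0 := by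
  obtain ⟨x, hx⟩ : ∃ x, f x ≠ 0 := by
    by_contra! h
    exact hf (LinearMap.ext h)
  obtain ⟨c, hc⟩ := AddChar.ne_one_iff.mp (hψ hx)
  refine AddChar.sum_eq_zero_of_ne_one (ψ := ψ.compAddMonoidHom f.toAddMonoidHom) fun h => hc ?_
  simpa [mul_comm, ← smul_eq_mul] using DFunLike.congr_fun h (c • x)

lemma Matrix.IsHermitian.star_trace_mul {n α : Type*} [Fintype n] [CommSemiring α] [StarRing α]
    {A B : Matrix n n α} (hA : A.IsHermitian) (hB : B.IsHermitian) :
    star (A * B).trace = (A * B).trace := by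
  rw [← trace_conjTranspose, conjTranspose_mul, hA.eq, hB.eq, trace_mul_comm]

section Symplectic

variable {d N : ℕ}

lemma symp_neg_right (χ χ' : PhasePoint d N) : symp d N χ (-χ') = -symp d N χ χ' := by
  simp only [symp, Prod.fst_neg, Prod.snd_neg, dotProduct_neg]
  ring

def sympLeft (χ' : PhasePoint d N) : PhasePoint d N →ₗ[ZMod d] ZMod d where
  toFun χ := symp d N χ χ'
  map_add' χ₁ χ₂ := by
    simp only [symp, Prod.fst_add, Prod.snd_add, add_dotProduct]
    ring
  map_smul' c χ := by
    simp only [symp, Prod.smul_fst, Prod.smul_snd, smul_dotProduct, smul_eq_mul,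
      RingHom.id_apply]
    ring

lemma sympLeft_ne_zero {χ' : PhasePoint d N} (hχ' : χ' ≠ 0) : sympLeft χ' ≠ 0 := by
  intro h
  apply hχ'
  ext i
  · simpa [sympLeft, symp, single_dotProduct] using LinearMap.congr_fun h (0, Pi.single i 1)
  · simpa [sympLeft, symp, single_dotProduct] using LinearMap.congr_fun h (Pi.single i 1, 0)

end Symplectic

section Characters

variable {d N : ℕ} [NeZero d]

lemma qomega_pow (n : ℕ) : qomega d ^ n = ZMod.stdAddChar (n : ZMod d) := by
  rw [qomega, ← Complex.exp_nat_mul, ZMod.stdAddChar_apply, ZMod.toCircle_natCast]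
  congr 1
  ring

lemma eomega_eq_stdAddChar (x : ZMod d) : eomega d x = ZMod.stdAddChar x := by
  rw [eomega, qomega_pow, ZMod.natCast_zmod_val]

lemma etau_eq_stdAddChar (x : ZMod d) :
    etau d x = ZMod.stdAddChar ((((d + 1) / 2 : ℕ) : ZMod d) * x) := by
  rw [etau, qtau, ← pow_mul, qomega_pow, Nat.cast_mul, ZMod.natCast_zmod_val]

lemma star_eomega (x : ZMod d) : star (eomega d x) = eomega d (-x) := by
  rw [eomega_eq_stdAddChar, eomega_eq_stdAddChar, AddChar.map_neg_eq_conj, Complex.star_def]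

lemma sum_eomega_neg_symp_of_ne_zero {χ' : PhasePoint d N} (hχ' : χ' ≠ 0) :
    ∑ χ, eomega d (-symp d N χ χ') = 0 := by
  have := AddChar.sum_comp_linearMap_eq_zero (ZMod.isPrimitive_stdAddChar d)
    (neg_ne_zero.mpr (sympLeft_ne_zero hχ'))
  simpa [eomega_eq_stdAddChar, sympLeft] using this

end Characters

section PhasePointOperators

variable {d N : ℕ} [NeZero d]

local notation "ψ" => (ZMod.stdAddChar : AddChar (ZMod d) ℂ)

lemma disp_apply (χ : PhasePoint d N) (i j : Fin N → ZMod d) :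
    Disp d N χ i j = if i = j + χ.1 then
      ψ ((((d + 1) / 2 : ℕ) : ZMod d) * (χ.1 ⬝ᵥ χ.2) + χ.2 ⬝ᵥ j) else 0 := by
  simp only [Disp, Matrix.smul_apply, Matrix.of_apply, smul_eq_mul, mul_ite, mul_zero,
    etau_eq_stdAddChar, eomega_eq_stdAddChar, AddChar.map_add_eq_mul]

lemma disp_zero : Disp d N 0 = 1 := by
  ext i j
  simp [disp_apply, Matrix.one_apply]

lemma disp_conjTranspose (hodd : Odd d) (χ : PhasePoint d N) :
    (Disp d N χ)ᴴ = Disp d N (-χ) := by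
  ext i j
  rw [Matrix.conjTranspose_apply, disp_apply, disp_apply, Prod.fst_neg]
  by_cases h : j = i + χ.1
  · have h' : i = j + -χ.1 := by rw [h]; abel
    rw [if_pos h, if_pos h', Complex.star_def, ← AddChar.map_neg_eq_conj]
    congr 1
    simp only [Prod.snd_neg, neg_dotProduct, dotProduct_neg, h, dotProduct_add,
      dotProduct_comm χ.2 χ.1]
    linear_combination -(χ.1 ⬝ᵥ χ.2) * two_mul_natCast_half hodd
  · have h' : i ≠ j + -χ.1 := fun hc => h (by rw [hc]; abel)
    rw [if_neg h, if_neg h', star_zero]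

lemma phasePointOp_isHermitian (hodd : Odd d) (χ : PhasePoint d N) :
    (PhasePointOp d N χ).IsHermitian := by
  rw [Matrix.IsHermitian, PhasePointOp, conjTranspose_smul, conjTranspose_sum]
  congr 1
  · simp
  · refine Fintype.sum_equiv (Equiv.neg _) _ _ fun χ' => ?_
    rw [conjTranspose_smul, disp_conjTranspose hodd, star_eomega, Equiv.neg_apply,
      symp_neg_right]

lemma sum_phasePointOp : ∑ χ : PhasePoint d N, PhasePointOp d N χ = ((d : ℂ) ^ N) • 1 := by
  have hd : (d : ℂ) ^ N ≠ 0 := pow_ne_zero _ (Nat.cast_ne_zero.mpr (NeZero.ne d))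
  unfold PhasePointOp
  rw [← Finset.smul_sum, Finset.sum_comm]
  simp_rw [← Finset.sum_smul]
  rw [Finset.sum_eq_single (0 : PhasePoint d N)
    (fun χ' _ hχ' => by rw [sum_eomega_neg_symp_of_ne_zero hχ', zero_smul])
    (fun h => absurd (Finset.mem_univ _) h)]
  have hcard : ∑ χ : PhasePoint d N, eomega d (-symp d N χ 0) = (d : ℂ) ^ N * (d : ℂ) ^ N := by
    simp [symp, eomega, ZMod.card]
  rw [hcard, disp_zero, smul_smul, inv_mul_cancel_left₀ hd]

end PhasePointOperators

section Wigner

variable {d N : ℕ} [NeZero d]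

lemma ofReal_wignerRe (hodd : Odd d) {ρ : Matrix (Fin N → ZMod d) (Fin N → ZMod d) ℂ}
    (hρ : ρ.IsHermitian) (χ : PhasePoint d N) :
    (WignerRe d N ρ χ : ℂ) = ((d : ℂ) ^ N)⁻¹ * (PhasePointOp d N χ * ρ).trace := by
  refine Complex.conj_eq_iff_re.mp ?_
  rw [map_mul, ← Complex.star_def, (phasePointOp_isHermitian hodd χ).star_trace_mul hρ]
  simp

lemma wignerReProd_eq_mul (hodd : Odd d) {M : ℕ}
    {ρ : Matrix (Fin N → ZMod d) (Fin N → ZMod d) ℂ}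
    {σ : Matrix (Fin M → ZMod d) (Fin M → ZMod d) ℂ}
    (hρ : ρ.IsHermitian) (hσ : σ.IsHermitian) (χ : PhasePoint d N × PhasePoint d M) :
    WignerReProd d N M ρ σ χ = WignerRe d N ρ χ.1 * WignerRe d M σ χ.2 := by
  rw [WignerReProd, ← mul_kronecker_mul, trace_kronecker, pow_add, mul_inv,
    mul_mul_mul_comm, ← ofReal_wignerRe hodd hρ, ← ofReal_wignerRe hodd hσ,
    ← Complex.ofReal_mul, Complex.ofReal_re]

lemma sum_wignerRe (ρ : Matrix (Fin N → ZMod d) (Fin N → ZMod d) ℂ) :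
    ∑ χ, WignerRe d N ρ χ = ρ.trace.re := by
  have hd : (d : ℂ) ^ N ≠ 0 := pow_ne_zero _ (Nat.cast_ne_zero.mpr (NeZero.ne d))
  simp only [WignerRe]
  rw [← Complex.re_sum, ← Finset.mul_sum, ← trace_sum, ← Finset.sum_mul, sum_phasePointOp,
    smul_mul, Matrix.one_mul, trace_smul, smul_eq_mul, inv_mul_cancel_left₀ hd]

lemma one_le_sum_abs_wignerRe {ρ : Matrix (Fin N → ZMod d) (Fin N → ZMod d) ℂ}
    (htr : ρ.trace = 1) : 1 ≤ ∑ χ, |WignerRe d N ρ χ| :=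
  calc (1 : ℝ) = ∑ χ, WignerRe d N ρ χ := by rw [sum_wignerRe, htr, Complex.one_re]
    _ ≤ |∑ χ, WignerRe d N ρ χ| := le_abs_self _
    _ ≤ ∑ χ, |WignerRe d N ρ χ| := Finset.abs_sum_le_sum_abs _ _

end Wigner

theorem stmt15_general (d N M : ℕ) [NeZero d] (hodd : Odd d)
    (ρ : Matrix (Fin N → ZMod d) (Fin N → ZMod d) ℂ)
    (σ : Matrix (Fin M → ZMod d) (Fin M → ZMod d) ℂ)
    (hρherm : ρᴴ = ρ) (hρtr : ρ.trace = 1)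
    (hσherm : σᴴ = σ) (hσtr : σ.trace = 1) :
    (∑ χ : PhasePoint d N × PhasePoint d M, |WignerReProd d N M ρ σ χ|)
      = (∑ χ : PhasePoint d N, |WignerRe d N ρ χ|)
        * (∑ χ : PhasePoint d M, |WignerRe d M σ χ|) ∧
    Real.log (∑ χ : PhasePoint d N × PhasePoint d M, |WignerReProd d N M ρ σ χ|)
      = Real.log (∑ χ : PhasePoint d N, |WignerRe d N ρ χ|)
        + Real.log (∑ χ : PhasePoint d M, |WignerRe d M σ χ|) := by
  have hnorm : ∑ χ : PhasePoint d N × PhasePoint d M, |WignerReProd d N M ρ σ χ|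
      = (∑ χ : PhasePoint d N, |WignerRe d N ρ χ|)
        * (∑ χ : PhasePoint d M, |WignerRe d M σ χ|) := by
    rw [Fintype.sum_prod_type, Finset.sum_mul_sum]
    simp_rw [wignerReProd_eq_mul hodd hρherm hσherm, abs_mul]
  have hρnorm := zero_lt_one.trans_le (one_le_sum_abs_wignerRe hρtr)
  have hσnorm := zero_lt_one.trans_le (one_le_sum_abs_wignerRe hσtr)
  exact ⟨hnorm, by rw [hnorm, Real.log_mul hρnorm.ne' hσnorm.ne']⟩

/-- The mana is additive under tensor products: for density operators `ρ`
on `(ℂ^d)^{⊗N}` and `σ` on `(ℂ^d)^{⊗M}` with `d` an odd prime,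
`‖ρ ⊗ σ‖_W = ‖ρ‖_W · ‖σ‖_W`, hence `M(ρ ⊗ σ) = M(ρ) + M(σ)`. -/
theorem stmt15 (d N M : ℕ) [NeZero d] (hprime : Nat.Prime d) (hodd : Odd d)
    (ρ : Matrix (Fin N → ZMod d) (Fin N → ZMod d) ℂ)
    (σ : Matrix (Fin M → ZMod d) (Fin M → ZMod d) ℂ)
    (hρherm : ρᴴ = ρ) (hρpos : ρ.PosSemidef) (hρtr : ρ.trace = 1)
    (hσherm : σᴴ = σ) (hσpos : σ.PosSemidef) (hσtr : σ.trace = 1) :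
    (∑ χ : PhasePoint d N × PhasePoint d M, |WignerReProd d N M ρ σ χ|)
      = (∑ χ : PhasePoint d N, |WignerRe d N ρ χ|)
        * (∑ χ : PhasePoint d M, |WignerRe d M σ χ|) ∧
    Real.log (∑ χ : PhasePoint d N × PhasePoint d M, |WignerReProd d N M ρ σ χ|)
      = Real.log (∑ χ : PhasePoint d N, |WignerRe d N ρ χ|)
        + Real.log (∑ χ : PhasePoint d M, |WignerRe d M σ χ|) :=
  stmt15_general d N M hodd ρ σ hρherm hρtr hσherm hσtr
end
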